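/- arXiv:1404.3882 — 2 statements merged into one kernel-verified Lean document; each statement's English description precedes it below -/
import Mathlib

section
/- Let H be obtained from a graph G with vertex set {v_1,…,v_k} by expanding each vertex v_i by a module M_i = (V_i, E_i). Then the number of minimal separators of H is at most the number of minimal separators of G plus the sum over i = 1,…,k of the number of minimal separators of M_i. -/
open SimpleGraph

universe u

/-- Reachability in `G − S`: there is a walk whose support avoids `S`. -/
def AvoidReach {V : Type u} (G : SimpleGraph V) (S : Set V) (u v : V) : Prop :=
  ∃ w : G.Walk u v, ∀ x ∈ w.support, x ∉ S

/-- `S` is a `u,v`-separator of `G`: `u, v ∉ S` and `u,v` lie in different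
connected components of `G − S`. -/
def IsSep {V : Type u} (G : SimpleGraph V) (S : Set V) (u v : V) : Prop :=
  u ∉ S ∧ v ∉ S ∧ ¬ AvoidReach G S u v

/-- `S` is a minimal `u,v`-separator of `G`. -/
def IsMinSep {V : Type u} (G : SimpleGraph V) (S : Set V) (u v : V) : Prop :=
  IsSep G S u v ∧ ∀ T ⊂ S, ¬ IsSep G T u v

/-- `S` is a minimal separator of `G`. -/
def IsMinimalSeparator {V : Type u} (G : SimpleGraph V) (S : Set V) : Prop :=
  ∃ u v, IsMinSep G S u v

/-- `C` is a connected component of `G − S`. -/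
def IsCompOf {V : Type u} (G : SimpleGraph V) (S C : Set V) : Prop :=
  ∃ v, v ∉ S ∧ C = {x | AvoidReach G S v x}

/-- The neighbourhood of a vertex set `A`: vertices outside `A` with a neighbour in `A`. -/
def setNbhd {V : Type u} (G : SimpleGraph V) (A : Set V) : Set V :=
  {x | x ∉ A ∧ ∃ a ∈ A, G.Adj x a}

/-- `C` is a full component of `G − S` associated to `S`, i.e. `N(C) = S`. -/
def IsFullCompOf {V : Type u} (G : SimpleGraph V) (S C : Set V) : Prop :=
  IsCompOf G S C ∧ setNbhd G C = S

/-- `W` is a vertex cover of `G`. -/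
def IsVC {V : Type u} (G : SimpleGraph V) (W : Set V) : Prop :=
  ∀ ⦃a b⦄, G.Adj a b → a ∈ W ∨ b ∈ W

/-- The vertex cover number `vc(G)`. -/
noncomputable def vcNum {V : Type u} (G : SimpleGraph V) : ℕ :=
  sInf {n | ∃ W : Set V, IsVC G W ∧ W.ncard = n}

/-- A graph is chordal if every cycle on four or more vertices has a chord, i.e. an
edge of the graph between two vertices of the cycle that is not an edge of the cycle. -/
def IsChordalG {V : Type u} (G : SimpleGraph V) : Prop :=
  ∀ (v : V) (w : G.Walk v v), w.IsCycle → 4 ≤ w.length →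
    ∃ x ∈ w.support, ∃ y ∈ w.support, G.Adj x y ∧ s(x, y) ∉ w.edges

/-- `H` is a minimal triangulation of `G`: a chordal supergraph of `G` such that no graph
strictly between `G` and `H` is chordal. -/
def IsMinimalTriangulation {V : Type u} (G H : SimpleGraph V) : Prop :=
  G ≤ H ∧ IsChordalG H ∧ ∀ F : SimpleGraph V, G ≤ F → F < H → ¬ IsChordalG F

/-- `Ω` is a maximal clique of `H`. -/
def IsMaxClique {V : Type u} (H : SimpleGraph V) (Ω : Set V) : Prop :=
  H.IsClique Ω ∧ ∀ t : Set V, H.IsClique t → Ω ⊆ t → t = Ω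

/-- `Ω` is a potential maximal clique of `G`: a maximal clique of some
minimal triangulation of `G`. -/
def IsPMC {V : Type u} (G : SimpleGraph V) (Ω : Set V) : Prop :=
  ∃ H : SimpleGraph V, IsMinimalTriangulation G H ∧ IsMaxClique H Ω

/-- The graph `H` obtained from `G` (with vertex set `{v_1, …, v_k} = Fin k`) by expanding
each vertex `i` by the module `M i`: the vertex set is the disjoint union `Σ i, V i`;
within each `V i` the edges are those of `M i`, and `a ∈ V i` is adjacent to `b ∈ V j`
(`i ≠ j`) iff `i` and `j` are adjacent in `G`. -/
def expandG {k : ℕ} {V : Fin k → Type u} (G : SimpleGraph (Fin k))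
    (M : ∀ i, SimpleGraph (V i)) : SimpleGraph (Σ i, V i) :=
  SimpleGraph.fromRel (fun a b =>
    (∃ h : a.1 = b.1, (M b.1).Adj (h ▸ a.2) b.2) ∨ (a.1 ≠ b.1 ∧ G.Adj a.1 b.1))

/-- The set of vertices of the expanded graph coming from the module `M i`,
i.e. the copy of `V i`. -/
def modSet {k : ℕ} {V : Fin k → Type u} (i : Fin k) : Set (Σ i, V i) := {x | x.1 = i}

/-!
Let `S` be a minimal `x,y`-separator of the expanded graph. If `x` and `y` lie in the same
module `V i`, every module adjacent to `i` lies in `S` (otherwise it joins `x` to `y` in two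
steps); a walk avoiding those modules never leaves `V i`, so `S ∩ V i` is a minimal separator
of `M i` and `S` is that set together with the neighbouring modules. If `x` and `y` lie in
different modules, the modules contained in `S` separate their indices in `G`; a minimal
separator `T` of `G` inside them blows up to a separator `⋃_{j ∈ T} V j ⊆ S`, which equals `S`
by minimality. So every minimal separator of the expanded graph is the image of a minimal
separator of `G` or of some `M i`.
-/

namespace AvoidReach

variable {W : Type*} {G : SimpleGraph W} {S : Set W} {u v w : W}

theorem refl (hv : v ∉ S) : AvoidReach G S v v :=
  ⟨.nil, by simpa using hv⟩

theorem cons (hadj : G.Adj u v) (hu : u ∉ S) : AvoidReach G S v w → AvoidReach G S u w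
  | ⟨p, hp⟩ => ⟨.cons hadj p, by simpa [hu] using hp⟩

theorem map {W' : Type*} {G' : SimpleGraph W'} {S' : Set W'} (f : G →g G') (hf : f ⁻¹' S' ⊆ S) :
    AvoidReach G S u v → AvoidReach G' S' (f u) (f v)
  | ⟨p, hp⟩ => ⟨p.map f, by simpa [Walk.support_map] using fun x hx hS => hp x hx (hf hS)⟩

end AvoidReach

section Separators

variable {W : Type*} {G : SimpleGraph W} {S T : Set W} {u v : W}

theorem IsMinSep.eq_of_subset (hS : IsMinSep G S u v) (hTS : T ⊆ S) (hT : IsSep G T u v) :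
    T = S :=
  by_contra fun hne => hS.2 T (hTS.ssubset_of_ne hne) hT

theorem IsSep.exists_isMinSep_subset [Finite W] (hS : IsSep G S u v) :
    ∃ T ⊆ S, IsMinSep G T u v := by
  obtain ⟨T, hTS, hT, hmin⟩ := exists_minimal_le_of_wellFoundedLT (IsSep G · u v) S hS
  exact ⟨T, hTS, hT, fun T' hT' hsep => hT'.not_subset (hmin hsep hT'.subset)⟩

end Separators

section expandG

variable {k : ℕ} {V : Fin k → Type*} {G : SimpleGraph (Fin k)} {M : ∀ i, SimpleGraph (V i)}

theorem expandG_adj_mk_mk {i : Fin k} {a b : V i} :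
    (expandG G M).Adj ⟨i, a⟩ ⟨i, b⟩ ↔ (M i).Adj a b := by
  simp only [expandG, fromRel_adj, ne_eq, Sigma.mk.injEq, heq_eq_eq, true_and, exists_const,
    not_true_eq_false, false_and, or_false, (M i).adj_comm b, or_self]
  exact ⟨And.right, fun h => ⟨h.ne, h⟩⟩

theorem expandG_adj_of_fst_ne {x y : Σ i, V i} (h : x.1 ≠ y.1) :
    (expandG G M).Adj x y ↔ G.Adj x.1 y.1 := by
  have hxy : x ≠ y := fun he => h (congrArg Sigma.fst he)
  simp [expandG, hxy, h, Ne.symm h, G.adj_comm y.1]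

variable (G M) in
def moduleHom (i : Fin k) : M i →g expandG G M where
  toFun := Sigma.mk i
  map_rel' := expandG_adj_mk_mk.2

theorem AvoidReach.fst_of_expandG {T : Set (Fin k)} {x y : Σ i, V i}
    (h : AvoidReach (expandG G M) (Sigma.fst ⁻¹' T) x y) : AvoidReach G T x.1 y.1 := by
  obtain ⟨w, hw⟩ := h
  induction w with
  | nil => exact .refl (hw _ (by simp))
  | @cons x z y hadj w ih =>
    have hz := ih fun a ha => hw a (by simp [ha])
    by_cases hxz : x.1 = z.1
    · exact hxz ▸ hz
    · exact .cons ((expandG_adj_of_fst_ne hxz).1 hadj) (hw x (by simp)) hz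

theorem AvoidReach.expandG_of_fst {S : Set (Σ i, V i)} {i j : Fin k}
    (h : AvoidReach G {m | ∀ c : V m, ⟨m, c⟩ ∈ S} i j) (hij : i ≠ j) {a : V i} {b : V j}
    (ha : ⟨i, a⟩ ∉ S) (hb : ⟨j, b⟩ ∉ S) : AvoidReach (expandG G M) S ⟨i, a⟩ ⟨j, b⟩ := by
  obtain ⟨q, hq⟩ := h
  induction q with
  | nil => exact absurd rfl hij
  | @cons i m j hadj q ih =>
    by_cases hmj : m = j
    · subst hmj
      exact .cons ((expandG_adj_of_fst_ne hij).2 hadj) ha (.refl hb)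
    · obtain ⟨c, hc⟩ : ∃ c : V m, ⟨m, c⟩ ∉ S := by simpa using hq m (by simp)
      exact .cons ((expandG_adj_of_fst_ne (y := ⟨m, c⟩) hadj.ne).2 hadj) ha
        (ih hmj hc hb fun x hx => hq x (by simp [hx]))

variable (G) in
def moduleSeparator (i : Fin k) (A : Set (V i)) : Set (Σ i, V i) :=
  Sigma.mk i '' A ∪ {x | G.Adj x.1 i}

theorem mk_mem_moduleSeparator {i : Fin k} {A : Set (V i)} {c : V i} :
    (⟨i, c⟩ : Σ i, V i) ∈ moduleSeparator G i A ↔ c ∈ A := by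
  simp [moduleSeparator]

theorem moduleSeparator_mono {i : Fin k} : Monotone (moduleSeparator (V := V) G i) :=
  fun _ _ hAB => Set.union_subset_union_left _ (Set.image_mono hAB)

theorem moduleSeparator_injective {i : Fin k} :
    Function.Injective (moduleSeparator (V := V) G i) :=
  fun A B hAB => Set.ext fun c => by
    rw [← mk_mem_moduleSeparator (G := G), hAB, mk_mem_moduleSeparator]

theorem avoidReach_moduleSeparator_iff {i : Fin k} {A : Set (V i)} {a b : V i} :
    AvoidReach (expandG G M) (moduleSeparator G i A) ⟨i, a⟩ ⟨i, b⟩ ↔ AvoidReach (M i) A a b := by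
  refine ⟨fun ⟨w, hw⟩ => ?_, .map (moduleHom G M i) fun _ => mk_mem_moduleSeparator.1⟩
  suffices ∀ {x y} (w : (expandG G M).Walk x y) {a b : V i}, x = ⟨i, a⟩ → y = ⟨i, b⟩ →
      (∀ z ∈ w.support, z ∉ moduleSeparator G i A) → AvoidReach (M i) A a b from
    this w rfl rfl hw
  intro x y w
  induction w with
  | nil =>
    rintro a b rfl hab hw
    obtain rfl : a = b := eq_of_heq (Sigma.mk.inj_iff.1 hab).2
    exact .refl fun ha => hw _ (by simp) (mk_mem_moduleSeparator.2 ha)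
  | @cons x z y hadj w ih =>
    rintro a b rfl rfl hw
    obtain ⟨j, c⟩ := z
    by_cases hji : j = i
    · subst hji
      exact .cons (expandG_adj_mk_mk.1 hadj) (fun ha => hw _ (by simp) (mk_mem_moduleSeparator.2 ha))
        (ih rfl rfl fun z hz => hw z (by simp [hz]))
    · exact absurd (Or.inr ((expandG_adj_of_fst_ne (Ne.symm hji)).1 hadj).symm)
        (hw ⟨j, c⟩ (by simp))

theorem isSep_moduleSeparator_iff {i : Fin k} {A : Set (V i)} {a b : V i} :
    IsSep (expandG G M) (moduleSeparator G i A) ⟨i, a⟩ ⟨i, b⟩ ↔ IsSep (M i) A a b := by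
  simp only [IsSep, mk_mem_moduleSeparator, avoidReach_moduleSeparator_iff]

theorem IsMinSep.of_expandG_mk_mk {S : Set (Σ i, V i)} {i : Fin k} {a b : V i}
    (hS : IsMinSep (expandG G M) S ⟨i, a⟩ ⟨i, b⟩) :
    IsMinSep (M i) (Sigma.mk i ⁻¹' S) a b ∧ S = moduleSeparator G i (Sigma.mk i ⁻¹' S) := by
  obtain ⟨ha, hb, hab⟩ := hS.1
  set A := Sigma.mk i ⁻¹' S
  have hsub : moduleSeparator G i A ⊆ S := by
    rintro x (⟨c, hc, rfl⟩ | hx)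
    · exact hc
    · by_contra hxS
      have hxi : x.1 ≠ i := hx.ne
      exact hab (.cons ((expandG_adj_of_fst_ne hxi.symm).2 hx.symm) ha
        (.cons ((expandG_adj_of_fst_ne (y := ⟨i, b⟩) hxi).2 hx) hxS (.refl hb)))
  have hA : IsSep (M i) A a b := ⟨ha, hb, fun h => hab (h.map (moduleHom G M i) subset_rfl)⟩
  have hSA : moduleSeparator G i A = S := hS.eq_of_subset hsub (isSep_moduleSeparator_iff.2 hA)
  refine ⟨⟨hA, fun T hTA hT => hTA.ne (moduleSeparator_injective (G := G) ?_)⟩, hSA.symm⟩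
  rw [hSA]
  exact hS.eq_of_subset ((moduleSeparator_mono hTA.subset).trans hsub)
    (isSep_moduleSeparator_iff.2 hT)

theorem IsMinSep.of_expandG_fst_ne {S : Set (Σ i, V i)} {x y : Σ i, V i}
    (hS : IsMinSep (expandG G M) S x y) (hxy : x.1 ≠ y.1) :
    ∃ T, IsMinSep G T x.1 y.1 ∧ S = Sigma.fst ⁻¹' T := by
  obtain ⟨hx, hy, hxy'⟩ := hS.1
  have hT₀ : IsSep G {m | ∀ c : V m, ⟨m, c⟩ ∈ S} x.1 y.1 :=
    ⟨fun h => hx (h x.2), fun h => hy (h y.2), fun h => hxy' (h.expandG_of_fst hxy hx hy)⟩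
  obtain ⟨T, hTT₀, hT⟩ := hT₀.exists_isMinSep_subset
  refine ⟨T, hT, (hS.eq_of_subset (fun z hz => hTT₀ hz z.2) ?_).symm⟩
  exact ⟨hT.1.1, hT.1.2.1, fun h => hT.1.2.2 h.fst_of_expandG⟩

theorem setOf_isMinimalSeparator_expandG_subset :
    {S | IsMinimalSeparator (expandG G M) S} ⊆
      (Sigma.fst ⁻¹' ·) '' {T | IsMinimalSeparator G T} ∪
        ⋃ i, moduleSeparator G i '' {A | IsMinimalSeparator (M i) A} := by
  rintro S ⟨⟨i, a⟩, ⟨j, b⟩, hS⟩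
  by_cases hij : i = j
  · subst hij
    obtain ⟨hA, hSA⟩ := hS.of_expandG_mk_mk
    exact Or.inr (Set.mem_iUnion.2 ⟨i, _, ⟨a, b, hA⟩, hSA.symm⟩)
  · obtain ⟨T, hT, hST⟩ := hS.of_expandG_fst_ne hij
    exact Or.inl ⟨T, ⟨_, _, hT⟩, hST.symm⟩

end expandG

theorem statement_10 {k : ℕ} {V : Fin k → Type} [∀ i, Fintype (V i)]
    (G : SimpleGraph (Fin k)) (M : ∀ i, SimpleGraph (V i)) :
    {S : Set (Σ i, V i) | IsMinimalSeparator (expandG G M) S}.ncard ≤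
      {S : Set (Fin k) | IsMinimalSeparator G S}.ncard +
        ∑ i : Fin k, {S : Set (V i) | IsMinimalSeparator (M i) S}.ncard := by
  calc _ ≤ ((Sigma.fst ⁻¹' ·) '' {T | IsMinimalSeparator G T} ∪
          ⋃ i, moduleSeparator G i '' {A | IsMinimalSeparator (M i) A}).ncard :=
        Set.ncard_le_ncard setOf_isMinimalSeparator_expandG_subset
    _ ≤ ((Sigma.fst ⁻¹' ·) '' {T | IsMinimalSeparator G T}).ncard +
          ∑ i, (moduleSeparator G i '' {A | IsMinimalSeparator (M i) A}).ncard :=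
        (Set.ncard_union_le _ _).trans (Nat.add_le_add_left (Set.ncard_iUnion_le_of_fintype _) _)
    _ ≤ _ := by gcongr <;> exact Set.ncard_image_le
end

section
/- Let H be obtained from a graph G with vertex set {v_1,…,v_k} by expanding each vertex v_i by a module M_i = (V_i, E_i). Let Ω be a potential maximal clique of H, and assume there is some V_i that intersects Ω but is not contained in Ω. Then Ω ∩ V_i is a potential maximal clique of M_i and Ω \ V_i = N_H(V_i). -/
open SimpleGraph

universe u

/-!
Let `H'` be a minimal triangulation of `H` in which `Ω` is a maximal clique, and let `D` be the
component of `H − Ω` through a vertex of `V_i \ Ω`. Two vertices of a clique of `H'` are joined in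
`H` avoiding the rest of the clique: otherwise deleting from `H'` the edges that leave the
component of one of them would give a smaller chordal supergraph of `H`. As `V_i` is a module,
this makes every vertex of `Ω \ V_i` adjacent to `D`, and every vertex of `Ω ∩ V_i` is adjacent
to `D` as soon as `D` meets `N(V_i)`. In a chordal graph no connected set outside a maximal clique
is adjacent to every vertex of the clique, so `D` misses `N(V_i)`, and this forces
`Ω \ V_i = N(V_i)`.

Hence `N(V_i)` is a clique of `H'` separating `V_i` from the rest, so replacing `H'` inside `V_i`
by any chordal graph between `M_i` and `H'[V_i]` keeps it chordal. Therefore `H'[V_i]` is a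
minimal triangulation of `M_i`, and `Ω ∩ V_i` is one of its maximal cliques.
-/

namespace SimpleGraph.Walk

variable {V W : Type*} {G : SimpleGraph V} {G' : SimpleGraph W} {u v : V}

lemma not_isChordless_iff {p : G.Walk u v} :
    ¬ p.IsChordless ↔ ∃ x ∈ p.support, ∃ y ∈ p.support, G.Adj x y ∧ s(x, y) ∉ p.edges := by
  simp [isChordless_iff_forall_mem_edges]

lemma IsChordless.map {p : G.Walk u v} (f : G ↪g G') (hp : p.IsChordless) :
    (p.map f.toHom).IsChordless := by
  rw [isChordless_iff_forall_mem_edges] at hp ⊢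
  simp only [support_map, edges_map, List.mem_map]
  rintro _ _ ⟨x, hx, rfl⟩ ⟨y, hy, rfl⟩ hxy
  exact ⟨s(x, y), hp hx hy (f.map_adj_iff.mp hxy), rfl⟩

lemma IsChordless.of_map {p : G.Walk u v} {f : G →g G'} (hf : Function.Injective f)
    (hp : (p.map f).IsChordless) : p.IsChordless := by
  rw [isChordless_iff_forall_mem_edges] at hp ⊢
  intro x y hx hy hxy
  have := hp (by rw [support_map]; exact List.mem_map_of_mem hx)
    (by rw [support_map]; exact List.mem_map_of_mem hy) (f.map_adj hxy)
  rw [edges_map] at this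
  obtain ⟨e, he, hef⟩ := List.mem_map.mp this
  rwa [← Sym2.map.injective hf (hef.trans (Sym2.map_mk f x y).symm)]

lemma exists_shorter_of_adj {x y : V} (p : G.Walk u v) (hx : x ∈ p.support) (hy : y ∈ p.support)
    (hxy : G.Adj x y) (he : s(x, y) ∉ p.edges) :
    ∃ q : G.Walk u v, q.length < p.length ∧ q.support ⊆ p.support := by
  obtain ⟨i, rfl, hi⟩ := mem_support_iff_exists_getVert.mp hx
  obtain ⟨j, rfl, hj⟩ := mem_support_iff_exists_getVert.mp hy
  wlog hij : i < j generalizing i j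
  · rcases (not_lt.mp hij).lt_or_eq with hji | rfl
    · exact this j hj hy i hi hx hxy.symm (by rwa [Sym2.eq_swap]) hji
    · exact absurd rfl hxy.ne
  have hji : i + 1 ≠ j := by
    rintro rfl
    exact he ((mk_mem_edges_iff_exists p).mpr ⟨i, by omega, rfl⟩)
  refine ⟨(p.take i).append (cons hxy (p.drop j)), ?_, ?_⟩
  · simp only [length_append, take_length, length_cons, drop_length]
    omega
  · rw [support_append, support_cons, List.tail_cons, support_take,
      drop_support_eq_support_drop_min]
    exact List.append_subset.mpr ⟨List.take_subset _ _, List.drop_subset _ _⟩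

lemma IsCycle.not_isChordless_of_forall_adj {b : V} {p : G.Walk u u} (hp : p.IsCycle)
    (hlen : 4 ≤ p.length) (hb : b ∈ p.support) (hadj : ∀ x ∈ p.support, x ≠ b → G.Adj b x) :
    ¬ p.IsChordless := by
  classical
  set N := p.toSubgraph.neighborSet b
  have hN : N.ncard = 2 := hp.ncard_neighborSet_toSubgraph_eq_two hb
  obtain ⟨x, hx, hxb, hxN⟩ : ∃ x ∈ p.support, x ≠ b ∧ x ∉ N := by
    by_contra! h
    have hsub : (p.support.tail.toFinset : Set V) ⊆ insert b N := fun x hx => by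
      have hx' : x ∈ p.support := List.mem_of_mem_tail (List.mem_toFinset.mp hx)
      by_cases hxb : x = b
      · exact Or.inl hxb
      · exact Or.inr (h x hx' hxb)
    have hcard := Set.ncard_le_ncard hsub ((Set.finite_of_ncard_ne_zero (by omega)).insert b)
    rw [Set.ncard_coe_finset, List.toFinset_card_of_nodup hp.support_nodup, List.length_tail,
      length_support] at hcard
    have := Set.ncard_insert_le b N
    omega
  rw [not_isChordless_iff]
  exact ⟨b, hb, x, hx, hadj x hx hxb, fun he => hxN (adj_toSubgraph_iff_mem_edges.mpr he)⟩

lemma exists_mem_tail_support_of_separates {x y : V} {T S : Set V} (p : G.Walk x y)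
    (hsep : ∀ a ∈ T, ∀ c, G.Adj a c → c ∈ T ∨ c ∈ S) (hx : x ∈ T) (hy : y ∉ T) :
    ∃ s ∈ p.support.tail, s ∈ S := by
  obtain ⟨d, hd, hd₁, hd₂⟩ := p.exists_boundary_dart T hx hy
  refine ⟨d.snd, ?_, (hsep _ hd₁ _ d.adj).resolve_left hd₂⟩
  rw [← map_snd_darts]
  exact List.mem_map_of_mem hd

lemma IsCycle.exists_nonconsecutive_of_separates {a b : V} {X S : Set V} {p : G.Walk u u}
    (hp : p.IsCycle) (hsep : ∀ x ∈ X, ∀ y, G.Adj x y → y ∈ X ∨ y ∈ S) (hXS : Disjoint X S)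
    (ha : a ∈ p.support) (haX : a ∈ X) (hb : b ∈ p.support) (hbX : b ∉ X) (hbS : b ∉ S) :
    ∃ s₁ ∈ p.support, ∃ s₂ ∈ p.support, s₁ ∈ S ∧ s₂ ∈ S ∧ s₁ ≠ s₂ ∧ s(s₁, s₂) ∉ p.edges := by
  classical
  have hsepR : ∀ x ∈ (X ∪ S)ᶜ, ∀ y, G.Adj x y → y ∈ (X ∪ S)ᶜ ∨ y ∈ S := by
    intro x hx y hxy
    by_contra! h
    rcases not_not.mp h.1 with hyX | hyS
    · exact hx (hsep y hyX x hxy.symm)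
    · exact h.2 hyS
  obtain ⟨c, hc, hcs, hce⟩ : ∃ c : G.Walk a a, c.IsCycle ∧ (∀ x, x ∈ c.support ↔ x ∈ p.support) ∧
      ∀ e, e ∈ c.edges ↔ e ∈ p.edges :=
    ⟨p.rotate a ha, hp.rotate ha, fun _ => mem_support_rotate_iff p a ha,
      fun e => (rotate_edges p a ha).perm.mem_iff⟩
  have hb' : b ∈ c.support := (hcs b).mpr hb
  set P₁ := c.takeUntil b hb'
  set P₂ := c.dropUntil b hb'
  have hspec : P₁.append P₂ = c := c.take_spec hb'
  have hdisj : P₁.support.tail.Disjoint P₂.support.tail := by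
    have := hc.support_nodup
    rw [← hspec, tail_support_append] at this
    exact List.disjoint_of_nodup_append this
  obtain ⟨s₁, hs₁, hs₁S⟩ := P₁.exists_mem_tail_support_of_separates hsep haX hbX
  obtain ⟨s₂, hs₂, hs₂S⟩ := P₂.exists_mem_tail_support_of_separates hsepR
    (fun h => h.elim hbX hbS) (fun h => h (Or.inl haX))
  refine ⟨s₁, (hcs s₁).mp (c.support_takeUntil_subset_support hb' (List.mem_of_mem_tail hs₁)),
    s₂, (hcs s₂).mp (c.support_dropUntil_subset_support hb' (List.mem_of_mem_tail hs₂)),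
    hs₁S, hs₂S, fun h => hdisj hs₁ (h ▸ hs₂), fun he => ?_⟩
  rw [← hce, ← hspec, edges_append, List.mem_append] at he
  rcases he with he | he
  · rcases List.mem_cons.mp (P₁.cons_tail_support ▸ P₁.snd_mem_support_of_mem_edges he) with h | h
    · exact Set.disjoint_left.mp hXS haX (h ▸ hs₂S)
    · exact hdisj h hs₂
  · rcases List.mem_cons.mp (P₂.cons_tail_support ▸ P₂.fst_mem_support_of_mem_edges he) with h | h
    · exact hbS (h ▸ hs₁S)
    · exact hdisj hs₁ h

lemma IsPath.exists_isCycle_of_adj {a b s k : V} {p : G.Walk a b} (hp : p.IsPath) (hab : a ≠ b)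
    (hsa : G.Adj s a) (hbk : G.Adj b k) (hks : G.Adj k s) (hs : s ∉ p.support)
    (hk : k ∉ p.support) :
    ∃ Z : G.Walk s s, Z.IsCycle ∧ 4 ≤ Z.length ∧
      (∀ v ∈ Z.support, v = s ∨ v ∈ p.support ∨ v = k) ∧
      Z.edges = s(s, a) :: (p.edges ++ [s(b, k), s(k, s)]) := by
  refine ⟨cons hsa ((p.concat hbk).concat hks), ?_, ?_, ?_, by simp [edges_concat]⟩
  · refine (cons_isCycle_iff _ hsa).mpr ⟨(hp.concat hk _).concat ?_ _, ?_⟩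
    · simp [support_concat, hs, hks.ne.symm]
    · simp only [edges_concat, List.concat_eq_append, List.mem_append, List.mem_singleton,
        Sym2.eq_iff, not_or]
      exact ⟨⟨fun h => hs (p.fst_mem_support_of_mem_edges h),
        fun h => hs (h.1 ▸ p.end_mem_support), fun h => hks.ne h.1.symm⟩,
        fun h => hks.ne h.1.symm, fun h => hk (h.2 ▸ p.start_mem_support)⟩
  · have : p.length ≠ 0 := fun h => hab (eq_of_length_eq_zero h)
    simp only [length_cons, length_concat]
    omega
  · intro v hv
    simp only [support_cons, support_concat, List.mem_cons, List.mem_append] at hv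
    tauto

lemma exists_walk_to_setNbhd {A : Set V} {x y : V} (p : G.Walk x y) (hx : x ∉ A) (hy : y ∈ A) :
    ∃ d ∈ setNbhd G A, ∃ r : G.Walk x d, ∀ v ∈ r.support, v ∈ p.support ∧ v ∉ A := by
  induction p with
  | nil => exact absurd hy hx
  | @cons x m y hxm p ih =>
    by_cases hm : m ∈ A
    · exact ⟨x, ⟨hx, m, hm, hxm⟩, nil, by simp [hx]⟩
    · obtain ⟨d, hd, r, hr⟩ := ih hm hy
      refine ⟨d, hd, cons hxm r, ?_⟩
      intro v hv
      rcases List.mem_cons.mp (support_cons hxm r ▸ hv) with rfl | hv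
      · exact ⟨(cons hxm p).start_mem_support, hx⟩
      · exact ⟨List.mem_cons_of_mem _ (hr v hv).1, (hr v hv).2⟩

end SimpleGraph.Walk

section Chordal

variable {V W : Type*} {G K F : SimpleGraph V} {G' : SimpleGraph W}

lemma isChordalG_iff :
    IsChordalG G ↔ ∀ (v : V) (w : G.Walk v v), w.IsCycle → 4 ≤ w.length → ¬ w.IsChordless := by
  simp only [IsChordalG, Walk.not_isChordless_iff]

lemma isChordalG_induce_iff {s : Set V} :
    IsChordalG (G.induce s) ↔ ∀ (v : V) (w : G.Walk v v), w.IsCycle → 4 ≤ w.length →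
      (∀ x ∈ w.support, x ∈ s) → ¬ w.IsChordless := by
  simp only [isChordalG_iff]
  constructor
  · intro h v w hw hlen hs hch
    have hmap := w.map_induce hs
    have hlen' : (w.induce s hs).length = w.length := by
      have := congrArg List.length (w.support_induce hs)
      rwa [List.length_attachWith, Walk.length_support, Walk.length_support,
        Nat.add_right_cancel_iff] at this
    rw [← hmap] at hw hch
    exact h _ _ ((Walk.isCycle_map_iff_of_injective (Embedding.induce (G := G) s).injective).mp hw)
      (hlen' ▸ hlen) (hch.of_map (Embedding.induce (G := G) s).injective)
  · intro h v w hw hlen hch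
    refine h _ (w.map (Embedding.induce s).toHom)
      ((Walk.isCycle_map_iff_of_injective (Embedding.induce (G := G) s).injective).mpr hw)
      (by rwa [Walk.length_map]) ?_ (hch.map (Embedding.induce s))
    simp only [Walk.support_map, List.mem_map]
    rintro _ ⟨x, -, rfl⟩
    exact x.2

lemma IsChordalG.of_embedding (f : G ↪g G') (h : IsChordalG G') : IsChordalG G := by
  rw [isChordalG_iff] at h ⊢
  intro v w hw hlen hch
  exact h _ (w.map f.toHom) ((Walk.isCycle_map_iff_of_injective f.injective).mpr hw)
    (by rwa [Walk.length_map]) (hch.map f)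

lemma IsChordalG.induce_of_le {s : Set V} (hF : IsChordalG F) (hle : K ≤ F)
    (hagree : ∀ ⦃u v⦄, u ∈ s → v ∈ s → F.Adj u v → K.Adj u v) : IsChordalG (K.induce s) := by
  have : K.induce s = F.induce s := by
    ext u v
    exact ⟨fun h => hle h, fun h => hagree u.2 v.2 h⟩
  rw [this]
  exact hF.of_embedding (Embedding.induce s)

theorem isChordalG_of_isClique_separator {X S : Set V} (hS : K.IsClique S) (hXS : Disjoint X S)
    (hsep : ∀ x ∈ X, ∀ y, K.Adj x y → y ∈ X ∨ y ∈ S) (hin : IsChordalG (K.induce (X ∪ S)))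
    (hout : IsChordalG (K.induce Xᶜ)) : IsChordalG K := by
  rw [isChordalG_induce_iff] at hin hout
  rw [isChordalG_iff]
  intro v w hw hlen
  by_cases hw₁ : ∀ x ∈ w.support, x ∈ Xᶜ
  · exact hout v w hw hlen hw₁
  by_cases hw₂ : ∀ x ∈ w.support, x ∈ X ∪ S
  · exact hin v w hw hlen hw₂
  push Not at hw₁ hw₂
  obtain ⟨a, ha, haX⟩ := hw₁
  obtain ⟨b, hb, hbXS⟩ := hw₂
  obtain ⟨s₁, h₁, s₂, h₂, hs₁, hs₂, hne, hnot⟩ := hw.exists_nonconsecutive_of_separates hsep hXS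
    ha (not_not.mp haX) hb (fun h => hbXS (Or.inl h)) (fun h => hbXS (Or.inr h))
  rw [Walk.not_isChordless_iff]
  exact ⟨s₁, h₁, s₂, h₂, hS hs₁ hs₂ hne, hnot⟩

theorem IsChordalG.sdiff_fromRel {X S : Set V} (hF : IsChordalG F) (hS : F.IsClique S)
    (hXS : Disjoint X S) : IsChordalG (F \ fromRel fun u v => u ∈ X ∧ v ∉ X ∪ S) := by
  have hadj : ∀ ⦃u v⦄, (F \ fromRel fun u v => u ∈ X ∧ v ∉ X ∪ S).Adj u v ↔
      F.Adj u v ∧ ¬(u ∈ X ∧ v ∉ X ∪ S) ∧ ¬(v ∈ X ∧ u ∉ X ∪ S) := by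
    intro u v
    simp only [sdiff_adj, fromRel_adj]
    constructor
    · rintro ⟨h, h'⟩
      exact ⟨h, fun hr => h' ⟨h.ne, Or.inl hr⟩, fun hr => h' ⟨h.ne, Or.inr hr⟩⟩
    · rintro ⟨h, h₁, h₂⟩
      exact ⟨h, fun ⟨_, hr⟩ => hr.elim h₁ h₂⟩
  refine isChordalG_of_isClique_separator (X := X) (S := S) ?_ hXS ?_
    (hF.induce_of_le sdiff_le fun u v hu hv h => hadj.mpr ⟨h, fun h' => h'.2 hv, fun h' => h'.2 hu⟩)
    (hF.induce_of_le sdiff_le fun u v hu hv h => hadj.mpr ⟨h, fun h' => hu h'.1, fun h' => hv h'.1⟩)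
  · intro a ha b hb hab
    exact hadj.mpr ⟨hS ha hb hab, fun h => Set.disjoint_left.mp hXS h.1 ha,
      fun h => Set.disjoint_left.mp hXS h.1 hb⟩
  · intro x hx y hxy
    by_contra h
    exact (hadj.mp hxy).2.1 ⟨hx, h⟩

theorem IsChordalG.exists_adj_adj_mem_support (hF : IsChordalG F) {s k : V} (hsk : F.Adj s k) :
    ∀ {a b : V} (w : F.Walk a b), s ∉ w.support → k ∉ w.support → F.Adj s a → F.Adj k b →
      ∃ c ∈ w.support, F.Adj s c ∧ F.Adj k c := by
  classical
  intro a b w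
  induction hn : w.length using Nat.strong_induction_on generalizing a b w with
  | _ n ih =>
  intro hs hk hsa hkb
  have shorter : ∀ {a' b'} (w' : F.Walk a' b'), w'.length < n → w'.support ⊆ w.support →
      F.Adj s a' → F.Adj k b' → ∃ c ∈ w.support, F.Adj s c ∧ F.Adj k c := by
    intro a' b' w' hlt hsub hsa' hkb'
    obtain ⟨c, hc, h⟩ := ih _ hlt w' rfl (fun h => hs (hsub h)) (fun h => hk (hsub h)) hsa' hkb'
    exact ⟨c, hsub hc, h⟩
  by_cases hka : F.Adj k a
  · exact ⟨a, w.start_mem_support, hsa, hka⟩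
  by_cases hsb : F.Adj s b
  · exact ⟨b, w.end_mem_support, hsb, hkb⟩
  obtain ⟨p, hp, hpw, hpn⟩ : ∃ p : F.Walk a b, p.IsPath ∧ p.support ⊆ w.support ∧ p.length ≤ n :=
    ⟨w.bypass, w.bypass_isPath, w.support_bypass_subset_support, hn ▸ w.length_bypass_le_length⟩
  obtain ⟨Z, hZ, hZlen, hZsupp, hZedges⟩ := hp.exists_isCycle_of_adj
    (by rintro rfl; exact hsb hsa) hsa hkb.symm hsk.symm (fun h => hs (hpw h)) fun h => hk (hpw h)
  obtain ⟨x, hx, y, hy, hxy, hxyZ⟩ := hF s Z hZ hZlen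
  have hs_chord : ∀ c ∈ p.support, F.Adj s c → s(s, c) ∉ Z.edges →
      ∃ c ∈ w.support, F.Adj s c ∧ F.Adj k c := by
    intro c hc hsc hnot
    have hca : c ≠ a := by rintro rfl; exact hnot (by simp [hZedges])
    exact shorter (p.dropUntil c hc) ((p.length_dropUntil_lt_length hc hca).trans_le hpn)
      (List.Subset.trans (p.support_dropUntil_subset_support hc) hpw) hsc hkb
  have hk_chord : ∀ c ∈ p.support, F.Adj k c → s(c, k) ∉ Z.edges →
      ∃ c ∈ w.support, F.Adj s c ∧ F.Adj k c := by
    intro c hc hkc hnot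
    have hcb : c ≠ b := by rintro rfl; exact hnot (by simp [hZedges])
    exact shorter (p.takeUntil c hc) ((p.length_takeUntil_lt_length hc hcb).trans_le hpn)
      (List.Subset.trans (p.support_takeUntil_subset_support hc) hpw) hsa hkc
  rcases hZsupp x hx with rfl | hxp | rfl <;> rcases hZsupp y hy with rfl | hyp | rfl
  · exact (hxy.ne rfl).elim
  · exact hs_chord y hyp hxy hxyZ
  · exact absurd (by simp [hZedges]) hxyZ
  · exact hs_chord x hxp hxy.symm (by rwa [Sym2.eq_swap])
  · obtain ⟨q, hq, hqp⟩ :=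
      p.exists_shorter_of_adj hxp hyp hxy fun h => hxyZ (by simp [hZedges, h])
    exact shorter q (by omega) (List.Subset.trans hqp hpw) hsa hkb
  · exact hk_chord x hxp hxy.symm hxyZ
  · exact absurd (by simp [hZedges]) hxyZ
  · exact hk_chord y hyp hxy (by rwa [Sym2.eq_swap])
  · exact (hxy.ne rfl).elim

theorem IsChordalG.exists_forall_adj_of_isClique (hF : IsChordalG F) {C K : Set V}
    (hC : ∀ a ∈ C, ∀ b ∈ C, ∃ w : F.Walk a b, ∀ x ∈ w.support, x ∈ C) (hCne : C.Nonempty)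
    (hK : K.Finite) (hKC : Disjoint K C) (hKcl : F.IsClique K)
    (hKadj : ∀ s ∈ K, ∃ c ∈ C, F.Adj s c) : ∃ c ∈ C, ∀ s ∈ K, F.Adj s c := by
  classical
  induction K, hK using Set.Finite.induction_on with
  | empty =>
    obtain ⟨c, hc⟩ := hCne
    exact ⟨c, hc, by simp⟩
  | @insert k K₀ hk₀ _ ih =>
    obtain ⟨c₀, hc₀, hc₀K⟩ := ih (hKC.mono_left (Set.subset_insert _ _))
      (hKcl.subset (Set.subset_insert _ _)) fun s hs => hKadj s (Set.mem_insert_of_mem _ hs)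
    obtain ⟨c₁, hc₁, hkc₁⟩ := hKadj k (Set.mem_insert _ _)
    obtain ⟨w, hwC⟩ := hC c₀ hc₀ c₁ hc₁
    -- the first neighbour `t` of `k` along a walk in `C` from `c₀` is the required vertex
    suffices ∀ n t (w : F.Walk c₀ t), w.length = n → (∀ x ∈ w.support, x ∈ C) → F.Adj k t →
        ∃ c ∈ C, ∀ s ∈ insert k K₀, F.Adj s c from this _ c₁ w rfl hwC hkc₁
    intro n
    induction n using Nat.strong_induction_on with
    | _ n ih' =>
    intro t w hn hwC hkt
    by_cases hfirst : ∃ x ∈ w.support, x ≠ t ∧ F.Adj k x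
    · obtain ⟨x, hx, hxt, hkx⟩ := hfirst
      exact ih' _ (hn ▸ w.length_takeUntil_lt_length hx hxt) x (w.takeUntil x hx) rfl
        (fun y hy => hwC y (w.support_takeUntil_subset_support hx hy)) hkx
    push Not at hfirst
    refine ⟨t, hwC t w.end_mem_support, ?_⟩
    rintro s (rfl | hs)
    · exact hkt
    have hsk : F.Adj s k :=
      hKcl (Set.mem_insert_of_mem _ hs) (Set.mem_insert _ _) fun h => hk₀ (h ▸ hs)
    have hout : ∀ x ∈ insert k K₀, x ∉ w.support := fun x hx hxw =>
      Set.disjoint_left.mp hKC hx (hwC x hxw)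
    obtain ⟨c, hc, hsc, hkc⟩ := hF.exists_adj_adj_mem_support hsk w
      (hout s (Set.mem_insert_of_mem _ hs)) (hout k (Set.mem_insert _ _)) (hc₀K s hs) hkt
    obtain rfl : c = t := by_contra fun hct => hfirst c hc hct hkc
    exact hsc

theorem IsChordalG.exists_forall_not_adj_of_isMaxClique (hF : IsChordalG F) {Ω C : Set V}
    (hΩ : IsMaxClique F Ω) (hfin : Ω.Finite)
    (hC : ∀ a ∈ C, ∀ b ∈ C, ∃ w : F.Walk a b, ∀ x ∈ w.support, x ∈ C) (hCne : C.Nonempty)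
    (hCΩ : Disjoint C Ω) : ∃ ω ∈ Ω, ∀ c ∈ C, ¬ F.Adj ω c := by
  by_contra! h
  obtain ⟨c, hc, hcΩ⟩ := hF.exists_forall_adj_of_isClique hC hCne hfin hCΩ.symm hΩ.1 h
  have hclique : F.IsClique (insert c Ω) := hΩ.1.insert fun ω hω _ => (hcΩ ω hω).symm
  exact Set.disjoint_left.mp hCΩ hc (hΩ.2 _ hclique (Set.subset_insert _ _) ▸ Set.mem_insert c Ω)

end Chordal

section AvoidReach

variable {V : Type*} {G G' H H' : SimpleGraph V} {S : Set V} {u v w x : V}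

lemma AvoidReach.refl_s12 (hu : u ∉ S) : AvoidReach G S u u := ⟨Walk.nil, by simpa using hu⟩

lemma AvoidReach.symm (h : AvoidReach G S u v) : AvoidReach G S v u := by
  obtain ⟨p, hp⟩ := h
  exact ⟨p.reverse, fun x hx => hp x (by simpa using hx)⟩

lemma AvoidReach.trans (h₁ : AvoidReach G S u v) (h₂ : AvoidReach G S v w) :
    AvoidReach G S u w := by
  obtain ⟨p, hp⟩ := h₁
  obtain ⟨q, hq⟩ := h₂
  exact ⟨p.append q, fun x hx => ((Walk.mem_support_append_iff p q).mp hx).elim (hp x) (hq x)⟩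

lemma avoidReach_of_adj (h : G.Adj u v) (hu : u ∉ S) (hv : v ∉ S) : AvoidReach G S u v :=
  ⟨h.toWalk, by simp [hu, hv]⟩

lemma AvoidReach.of_mem_support (p : G.Walk u v) (hp : ∀ y ∈ p.support, y ∉ S)
    (hx : x ∈ p.support) : AvoidReach G S u x := by
  classical
  exact ⟨p.takeUntil x hx, fun y hy => hp y (p.support_takeUntil_subset_support hx hy)⟩

lemma AvoidReach.exists_walk (hle : G ≤ G') (hv : AvoidReach G S u v) (hw : AvoidReach G S u w) :
    ∃ p : G'.Walk v w, ∀ x ∈ p.support, AvoidReach G S u x := by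
  obtain ⟨p, hp⟩ := hv
  obtain ⟨q, hq⟩ := hw
  refine ⟨(p.reverse.append q).mapLe hle, fun x hx => ?_⟩
  rw [Walk.support_mapLe_eq_support, Walk.mem_support_append_iff, Walk.support_reverse,
    List.mem_reverse] at hx
  exact hx.elim (AvoidReach.of_mem_support p hp) (AvoidReach.of_mem_support q hq)

theorem IsMinimalTriangulation.avoidReach_of_isClique (hmt : IsMinimalTriangulation H H')
    {Ω : Set V} (hΩ : H'.IsClique Ω) {x y : V} (hx : x ∈ Ω) (hy : y ∈ Ω) (hxy : x ≠ y) :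
    AvoidReach H (Ω \ {x, y}) x y := by
  by_contra hxy'
  obtain ⟨hle, hch, hmin⟩ := hmt
  set S := Ω \ {x, y}
  set X := {c | AvoidReach H S x c}
  have hXS : Disjoint X S := Set.disjoint_left.mpr fun c ⟨p, hp⟩ => hp c p.end_mem_support
  have hxX : x ∈ X := AvoidReach.refl_s12 fun h => h.2 (by simp)
  have hyXS : y ∉ X ∪ S := fun h => h.elim hxy' fun h => h.2 (by simp)
  have hclosed : ∀ ⦃u v⦄, u ∈ X → H.Adj u v → v ∈ X ∪ S := by
    intro u v hu huv
    by_cases hv : v ∈ S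
    · exact Or.inr hv
    · exact Or.inl (AvoidReach.trans hu (avoidReach_of_adj huv (hXS.notMem_of_mem_left hu) hv))
  refine hmin (H' \ fromRel fun u v => u ∈ X ∧ v ∉ X ∪ S) (fun u v huv => ⟨hle huv, ?_⟩)
    (lt_of_le_of_ne sdiff_le fun h => ?_) (hch.sdiff_fromRel (hΩ.subset Set.sdiff_subset) hXS)
  · rintro ⟨-, ⟨hu, hv⟩ | ⟨hv, hu⟩⟩
    · exact hv (hclosed hu huv)
    · exact hu (hclosed hv huv.symm)
  · have hxy'' := hΩ hx hy hxy
    rw [← h, sdiff_adj, fromRel_adj] at hxy''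
    exact hxy''.2 ⟨hxy, Or.inl ⟨hxX, hyXS⟩⟩

end AvoidReach

section Module

def IsModule {V : Type*} (H : SimpleGraph V) (A : Set V) : Prop :=
  ∀ ⦃u⦄, u ∉ A → ∀ ⦃a b⦄, a ∈ A → b ∈ A → H.Adj u a → H.Adj u b

variable {V β : Type*} {H H' : SimpleGraph V} {A Ω : Set V} {u x y z : V}

lemma IsModule.adj_of_mem_setNbhd (hA : IsModule H A) (hu : u ∈ setNbhd H A) {a : V}
    (ha : a ∈ A) : H.Adj u a := by
  obtain ⟨huA, b, hb, hub⟩ := hu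
  exact hA huA hb ha hub

lemma exists_adj_avoidReach_of_isModule (hmt : IsMinimalTriangulation H H') (hΩ : H'.IsClique Ω)
    (hA : IsModule H A) (hy : y ∈ Ω ∩ A) (hz : z ∈ A \ Ω) (hx : x ∈ Ω) (hxA : x ∉ A) :
    (∃ c, AvoidReach H Ω z c ∧ H.Adj x c) ∧
      (x ∈ setNbhd H A ∨ ∃ d ∈ setNbhd H A, AvoidReach H Ω z d) := by
  classical
  obtain ⟨w, hw⟩ := hmt.avoidReach_of_isClique hΩ hx hy.1 (by rintro rfl; exact hxA hy.2)
  obtain ⟨d, hd, r, hr⟩ := w.exists_walk_to_setNbhd hxA hy.2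
  obtain ⟨p, hp, hpΩ⟩ : ∃ p : H.Walk x d, p.IsPath ∧ ∀ v ∈ p.support, v ≠ x → v ∉ Ω := by
    refine ⟨r.bypass, r.bypass_isPath, fun v hv hvx hvΩ => ?_⟩
    obtain ⟨hvw, hvA⟩ := hr v (r.support_bypass_subset_support hv)
    refine hw v hvw ⟨hvΩ, ?_⟩
    rintro (rfl | rfl)
    exacts [hvx rfl, hvA hy.2]
  cases p with
  | nil => exact ⟨⟨z, AvoidReach.refl_s12 hz.2, hA.adj_of_mem_setNbhd hd hz.1⟩, Or.inl hd⟩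
  | cons hxc q =>
    have hxq : x ∉ q.support := ((Walk.cons_isPath_iff _ _).mp hp).2
    have hqΩ : ∀ v ∈ q.support, v ∉ Ω := fun v hv =>
      hpΩ v (List.mem_cons_of_mem _ hv) fun h => hxq (h ▸ hv)
    have hzd : AvoidReach H Ω z d :=
      avoidReach_of_adj (hA.adj_of_mem_setNbhd hd hz.1).symm hz.2 (hqΩ d q.end_mem_support)
    exact ⟨⟨_, hzd.trans (AvoidReach.symm ⟨q, hqΩ⟩), hxc⟩, Or.inr ⟨d, hd, hzd⟩⟩

lemma notMem_setNbhd_of_avoidReach (hmt : IsMinimalTriangulation H H') (hΩ : IsMaxClique H' Ω)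
    (hfin : Ω.Finite) (hA : IsModule H A) (hy : y ∈ Ω ∩ A) (hz : z ∈ A \ Ω) {d : V}
    (hd : AvoidReach H Ω z d) : d ∉ setNbhd H A := by
  intro hdN
  obtain ⟨ω, hω, hωD⟩ := hmt.2.1.exists_forall_not_adj_of_isMaxClique hΩ hfin
    (C := {c | AvoidReach H Ω z c}) (fun a ha b hb => ha.exists_walk hmt.1 hb)
    ⟨z, AvoidReach.refl_s12 hz.2⟩ (Set.disjoint_left.mpr fun c ⟨p, hp⟩ => hp c p.end_mem_support)
  by_cases hωA : ω ∈ A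
  · exact hωD d hd (hmt.1 (hA.adj_of_mem_setNbhd hdN hωA).symm)
  · obtain ⟨c, hc, hωc⟩ := (exists_adj_avoidReach_of_isModule hmt hΩ.1 hA hy hz hω hωA).1
    exact hωD c hc (hmt.1 hωc)

theorem IsMaxClique.diff_eq_setNbhd_of_isModule (hΩ : IsMaxClique H' Ω)
    (hmt : IsMinimalTriangulation H H') (hfin : Ω.Finite) (hA : IsModule H A) (hy : y ∈ Ω ∩ A)
    (hz : z ∈ A \ Ω) : Ω \ A = setNbhd H A := by
  ext x
  constructor
  · rintro ⟨hx, hxA⟩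
    obtain h | ⟨d, hd, hzd⟩ := (exists_adj_avoidReach_of_isModule hmt hΩ.1 hA hy hz hx hxA).2
    · exact h
    · exact absurd hd (notMem_setNbhd_of_avoidReach hmt hΩ hfin hA hy hz hzd)
  · intro hx
    refine ⟨by_contra fun hxΩ => notMem_setNbhd_of_avoidReach hmt hΩ hfin hA hy hz ?_ hx, hx.1⟩
    exact avoidReach_of_adj (hA.adj_of_mem_setNbhd hx hz.1).symm hz.2 hxΩ

end Module

section Comap

variable {V β : Type*} {H H' F : SimpleGraph V} {Ω : Set V}

lemma IsMaxClique.comap_of_isModule (f : β ↪ V) (hΩ : IsMaxClique H' Ω) (hle : H ≤ H')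
    (hA : IsModule H (Set.range f)) (hΩA : Ω \ Set.range f ⊆ setNbhd H (Set.range f)) :
    IsMaxClique (H'.comap f) (f ⁻¹' Ω) := by
  refine ⟨fun p hp q hq hpq => hΩ.1 hp hq (f.injective.ne hpq), fun t ht hsub => ?_⟩
  have hclique : H'.IsClique (Ω ∪ f '' t) := by
    have := H'.symm
    rw [IsClique, Set.pairwise_union_of_symm]
    refine ⟨hΩ.1, ?_, ?_⟩
    · rintro _ ⟨p, hp, rfl⟩ _ ⟨q, hq, rfl⟩ hpq
      exact ht hp hq (ne_of_apply_ne f hpq)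
    · rintro ω hω _ ⟨q, hq, rfl⟩ hne
      by_cases hωA : ω ∈ Set.range f
      · obtain ⟨p, rfl⟩ := hωA
        exact ht (hsub hω) hq (ne_of_apply_ne f hne)
      · exact hle (hA.adj_of_mem_setNbhd (hΩA ⟨hω, hωA⟩) ⟨q, rfl⟩)
  refine Set.Subset.antisymm (fun p hp => ?_) hsub
  show f p ∈ Ω
  rw [← hΩ.2 _ hclique Set.subset_union_left]
  exact Or.inr ⟨p, hp, rfl⟩

def replaceModule (H H' : SimpleGraph V) (f : β ↪ V) (F : SimpleGraph β) : SimpleGraph V :=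
  F.map f ⊔ H ⊔ (H'.induce (Set.range f)ᶜ).spanningCoe

variable {f : β ↪ V} {F : SimpleGraph β}

lemma replaceModule_adj {u v : V} : (replaceModule H H' f F).Adj u v ↔
    ((∃ p q, F.Adj p q ∧ f p = u ∧ f q = v) ∨ H.Adj u v) ∨
      (u ∉ Set.range f ∧ v ∉ Set.range f ∧ H'.Adj u v) := by
  simp only [replaceModule, sup_adj, map_adj]
  refine or_congr_right ⟨?_, ?_⟩
  · rintro ⟨⟨u, hu⟩, ⟨v, hv⟩, h, rfl, rfl⟩
    exact ⟨hu, hv, h⟩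
  · rintro ⟨hu, hv, h⟩
    exact ⟨⟨u, hu⟩, ⟨v, hv⟩, h, rfl, rfl⟩

lemma le_replaceModule : H ≤ replaceModule H H' f F :=
  fun _ _ h => replaceModule_adj.mpr (Or.inl (Or.inr h))

lemma replaceModule_le (hle : H ≤ H') (hF : F ≤ H'.comap f) : replaceModule H H' f F ≤ H' :=
  sup_le (sup_le ((map_le_iff_le_comap f F H').mpr hF) hle) (H'.spanningCoe_induce_le _)

lemma comap_replaceModule (hF : H.comap f ≤ F) : (replaceModule H H' f F).comap f = F := by
  ext p q
  rw [comap_adj, replaceModule_adj]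
  constructor
  · rintro ((⟨p', q', h, hp, hq⟩ | h) | ⟨hp, -⟩)
    · rwa [← f.injective hp, ← f.injective hq]
    · exact hF h
    · exact absurd ⟨p, rfl⟩ hp
  · exact fun h => Or.inl (Or.inl ⟨p, q, h, rfl, rfl⟩)

lemma isChordalG_replaceModule (hH' : IsChordalG H') (hF : IsChordalG F) (hle : H ≤ H')
    (hHF : H.comap f ≤ F) (hFH' : F ≤ H'.comap f) (hA : IsModule H (Set.range f))
    (hN : H'.IsClique (setNbhd H (Set.range f))) : IsChordalG (replaceModule H H' f F) := by
  set K := replaceModule H H' f F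
  have hout : ∀ ⦃u v⦄, u ∉ Set.range f → v ∉ Set.range f → H'.Adj u v → K.Adj u v :=
    fun u v hu hv h => replaceModule_adj.mpr (Or.inr ⟨hu, hv, h⟩)
  have hNK : K.IsClique (setNbhd H (Set.range f)) :=
    fun u hu v hv huv => hout hu.1 hv.1 (hN hu hv huv)
  have hinside : IsChordalG (K.induce (Set.range f)) :=
    (comap_replaceModule hHF ▸ hF : IsChordalG (K.comap f)).of_embedding
      (Embedding.isoInduceRange (Embedding.comap f K)).symm.toEmbedding
  refine isChordalG_of_isClique_separator hNK (Set.disjoint_right.mpr fun _ hu => hu.1) ?_ ?_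
    (hH'.induce_of_le (replaceModule_le hle hFH') hout)
  · rintro x hx y hxy
    by_contra! hy
    rcases replaceModule_adj.mp hxy with (⟨p, q, -, -, rfl⟩ | h) | ⟨hx', -⟩
    · exact hy.1 ⟨q, rfl⟩
    · exact hy.2 ⟨hy.1, x, hx, h.symm⟩
    · exact hx' hx
  · rw [isChordalG_induce_iff] at hinside ⊢
    intro v w hw hlen hwA
    by_cases hwf : ∀ x ∈ w.support, x ∈ Set.range f
    · exact hinside v w hw hlen hwf
    push Not at hwf
    obtain ⟨n, hn, hnf⟩ := hwf
    have hnN := (hwA n hn).resolve_left hnf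
    refine hw.not_isChordless_of_forall_adj hlen hn fun x hx hxn => ?_
    rcases hwA x hx with hxf | hxN
    · exact le_replaceModule (hA.adj_of_mem_setNbhd hnN hxf)
    · exact hNK hnN hxN hxn.symm

theorem IsMinimalTriangulation.comap_of_isModule (f : β ↪ V) (hmt : IsMinimalTriangulation H H')
    (hA : IsModule H (Set.range f)) (hN : H'.IsClique (setNbhd H (Set.range f))) :
    IsMinimalTriangulation (H.comap f) (H'.comap f) := by
  obtain ⟨hle, hch, hmin⟩ := hmt
  refine ⟨comap_monotone f hle, hch.of_embedding (Embedding.comap f H'), fun F hHF hFH' hF => ?_⟩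
  refine hmin (replaceModule H H' f F) le_replaceModule
    (lt_of_le_of_ne (replaceModule_le hle hFH'.le) fun h => hFH'.ne ?_)
    (isChordalG_replaceModule hch hF hle hHF hFH'.le hA hN)
  rw [← comap_replaceModule hHF, h]

theorem IsPMC.comap_of_isModule (f : β ↪ V) (hΩ : IsPMC H Ω) (hfin : Ω.Finite)
    (hA : IsModule H (Set.range f)) (hint : (Ω ∩ Set.range f).Nonempty)
    (hnsub : ¬ Set.range f ⊆ Ω) :
    IsPMC (H.comap f) (f ⁻¹' Ω) ∧ Ω \ Set.range f = setNbhd H (Set.range f) := by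
  obtain ⟨H', hmt, hΩ⟩ := hΩ
  obtain ⟨y, hy⟩ := hint
  obtain ⟨z, hzA, hzΩ⟩ := Set.not_subset.mp hnsub
  have hN := hΩ.diff_eq_setNbhd_of_isModule hmt hfin hA hy ⟨hzA, hzΩ⟩
  exact ⟨⟨H'.comap f, hmt.comap_of_isModule f hA (hN ▸ hΩ.1.subset Set.sdiff_subset),
    hΩ.comap_of_isModule f hmt.1 hA hN.subset⟩, hN⟩

end Comap

section Expand

variable {k : ℕ} {V : Fin k → Type u} (G : SimpleGraph (Fin k)) (M : ∀ i, SimpleGraph (V i))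

lemma expandG_adj_mk {i : Fin k} {p q : V i} :
    (expandG G M).Adj ⟨i, p⟩ ⟨i, q⟩ ↔ (M i).Adj p q := by
  rw [expandG, fromRel_adj]
  constructor
  · rintro ⟨-, (⟨_, h⟩ | ⟨h, -⟩) | (⟨_, h⟩ | ⟨h, -⟩)⟩
    exacts [h, absurd rfl h, h.symm, absurd rfl h]
  · exact fun h => ⟨fun he => h.ne (by simpa using he), Or.inl (Or.inl ⟨rfl, h⟩)⟩

lemma expandG_adj_of_fst_ne_s12 {a b : Σ j, V j} (hab : a.1 ≠ b.1) :
    (expandG G M).Adj a b ↔ G.Adj a.1 b.1 := by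
  rw [expandG, fromRel_adj]
  constructor
  · rintro ⟨-, (⟨h, -⟩ | ⟨-, h⟩) | (⟨h, -⟩ | ⟨-, h⟩)⟩
    exacts [absurd h hab, h, absurd h.symm hab, h.symm]
  · exact fun h => ⟨fun he => hab (congrArg Sigma.fst he), Or.inl (Or.inr ⟨hab, h⟩)⟩

lemma comap_sigmaMk_expandG (i : Fin k) : (expandG G M).comap (Sigma.mk i) = M i := by
  ext p q
  exact expandG_adj_mk G M

lemma isModule_modSet (i : Fin k) : IsModule (expandG G M) (modSet i) := by
  intro u hu a b ha hb hua
  have hb' : u.1 ≠ b.1 := fun h => hu (h.trans hb)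
  rw [expandG_adj_of_fst_ne_s12 G M hb', hb]
  rw [expandG_adj_of_fst_ne_s12 G M fun h => hu (h.trans ha), ha] at hua
  exact hua

end Expand

theorem statement_12 {k : ℕ} {V : Fin k → Type} [∀ i, Fintype (V i)]
    (G : SimpleGraph (Fin k)) (M : ∀ i, SimpleGraph (V i))
    (Ω : Set (Σ i, V i)) (hΩ : IsPMC (expandG G M) Ω)
    (i : Fin k) (hint : (Ω ∩ modSet i).Nonempty) (hnsub : ¬ modSet i ⊆ Ω) :
    IsPMC (M i) (Sigma.mk i ⁻¹' Ω) ∧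
      Ω \ modSet i = setNbhd (expandG G M) (modSet i) := by
  have hrange : Set.range (Function.Embedding.sigmaMk (β := V) i) = modSet i :=
    Set.range_sigmaMk i
  rw [← comap_sigmaMk_expandG G M i, ← hrange]
  rw [← hrange] at hint hnsub
  exact hΩ.comap_of_isModule _ (Set.toFinite Ω) (hrange ▸ isModule_modSet G M i) hint hnsub
end
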